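/- arXiv:0910.4306 — 5 statements merged into one kernel-verified Lean document; each statement's English description precedes it below -/
import Mathlib

section
/- For complex numbers a, b, c and a nonnegative integer α, the value of the iterated partial derivative ∂^α/∂z₁^α ∂^α/∂z₂^α of exp(a z₁ + b z₂ + c z₁ z₂) evaluated at z₁ = z₂ = 0 equals Σ_{h=0}^{α} (ab)^h c^{α−h} binom(α,h)² (α−h)!. -/
/-!
The exponent is affine in `z₁`, so the inner derivative is `(a + c z₂) ^ α * exp (b z₂)`.
The Leibniz rule expands the outer derivative of this product as a binomial sum, and
`α.descFactorial k = k ! * α.choose k` puts it in the stated form after reindexing `h = α - k`.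
-/

open Complex Finset

theorem iteratedDeriv_const_add_mul_pow {𝕜 : Type*} [NontriviallyNormedField 𝕜]
    (a c : 𝕜) (m k : ℕ) :
    iteratedDeriv k (fun z => (a + c * z) ^ m) =
      fun z => c ^ k * (m.descFactorial k * (a + c * z) ^ (m - k)) := by
  rw [iteratedDeriv_comp_const_mul (f := fun w => (a + w) ^ m) (by fun_prop),
    iteratedDeriv_comp_const_add k (· ^ m) a]
  simp

theorem iteratedDeriv_cexp_const_add_mul (u v : ℂ) (n : ℕ) :
    iteratedDeriv n (fun z => exp (u + v * z)) = fun z => v ^ n * exp (u + v * z) := by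
  funext z
  simp only [exp_add, iteratedDeriv_const_mul_field, iteratedDeriv_cexp_const_mul]
  ring

theorem iteratedDeriv_const_add_mul_pow_mul_cexp_zero (a b c : ℂ) (m n : ℕ) :
    iteratedDeriv n (fun z => (a + c * z) ^ m * exp (b * z)) 0 =
      ∑ k ∈ range (n + 1), n.choose k * m.descFactorial k * a ^ (m - k) * b ^ (n - k) * c ^ k := by
  rw [iteratedDeriv_fun_mul (by fun_prop) (by fun_prop)]
  simp only [iteratedDeriv_const_add_mul_pow, iteratedDeriv_cexp_const_mul]
  refine sum_congr rfl fun k _ => ?_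
  simp only [mul_zero, add_zero, exp_zero]
  ring

theorem iterated_deriv_exp_bilinear (a b c : ℂ) (α : ℕ) :
    iteratedDeriv α
      (fun z₂ : ℂ => iteratedDeriv α
        (fun z₁ : ℂ => Complex.exp (a * z₁ + b * z₂ + c * z₁ * z₂)) 0) 0 =
    ∑ h ∈ range (α + 1),
      (a * b) ^ h * c ^ (α - h) * ((α.choose h : ℂ)) ^ 2 * ((α - h).factorial : ℂ) := by
  have inner (z₂ : ℂ) : iteratedDeriv α (fun z₁ => exp (a * z₁ + b * z₂ + c * z₁ * z₂)) 0 =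
      (a + c * z₂) ^ α * exp (b * z₂) := by
    have affine : (fun z₁ => exp (a * z₁ + b * z₂ + c * z₁ * z₂)) =
        fun z₁ => exp (b * z₂ + (a + c * z₂) * z₁) := by
      funext z₁
      ring_nf
    rw [affine, iteratedDeriv_cexp_const_add_mul]
    simp
  simp only [inner, iteratedDeriv_const_add_mul_pow_mul_cexp_zero]
  rw [← sum_range_reflect]
  refine sum_congr rfl fun k hk => ?_
  have hkα : k ≤ α := Nat.lt_succ_iff.mp (mem_range.mp hk)
  rw [Nat.add_sub_cancel, Nat.sub_sub_self hkα, Nat.descFactorial_eq_factorial_mul_choose,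
    Nat.choose_symm hkα]
  push_cast
  ring
end

section
/- Let k and m be integers and let φ : ℍ × ℂ² → ℂ be holomorphic. Define the slash action (φ|_{k,m} M)(τ,z₁,z₂) = (cτ+d)^{−k} exp(−2πi m c z₁ z₂/(cτ+d)) φ(Mτ, z₁/(cτ+d), z₂/(cτ+d)) for M = [[a,b],[c,d]] ∈ SL(2,ℝ), and the heat operator L_{k,m} = 8πim ∂_τ − (2k−2)(1/z₁) ∂_{z₂} − (2k−2)(1/z₂) ∂_{z₁} − 4 ∂²_{z₁ z₂}. Then L_{k,m}(φ|_{k,m} M) = (L_{k,m} φ)|_{k+2,m} M. -/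
/-!
Write `J = cτ + d`. Since `det M = 1`, `d(Mτ)/dτ = J⁻²`, so by the chain rule every partial
derivative of `φ|M` is `J⁻ᵏ e(…)` times a combination of `φ` and its partials at
`(Mτ, z₁/J, z₂/J)`, with a factor `J⁻¹` per `z`-derivative and `J⁻²` for the `τ`-derivative.
The remaining terms, coming from differentiating `J⁻ᵏ`, the exponential factor and `zᵢ/J` in `τ`,
cancel in `L_{k,m}`; it is the coefficient `2k - 2` of the singular terms that absorbs the
derivative of `J⁻ᵏ`. The only analytic input is that `∂_{z₁}φ` is again holomorphic in `z₂`,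
which follows from Cauchy's integral formula by differentiating under the integral sign.
-/

open Complex Matrix

noncomputable def heatOp (k m : ℤ) (φ : ℂ → ℂ → ℂ → ℂ) : ℂ → ℂ → ℂ → ℂ :=
  fun τ z₁ z₂ =>
    8 * Real.pi * Complex.I * m * deriv (fun t => φ t z₁ z₂) τ
      - (2 * k - 2) / z₁ * deriv (fun w => φ τ z₁ w) z₂
      - (2 * k - 2) / z₂ * deriv (fun w => φ τ w z₂) z₁
      - 4 * deriv (fun w => deriv (fun u => φ τ u w) z₁) z₂

noncomputable def hermSlash (k m : ℤ) (M : Matrix.SpecialLinearGroup (Fin 2) ℝ)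
    (φ : ℂ → ℂ → ℂ → ℂ) : ℂ → ℂ → ℂ → ℂ :=
  fun τ z₁ z₂ =>
    ((M 1 0 : ℝ) * τ + (M 1 1 : ℝ)) ^ (-k) *
      Complex.exp (-2 * Real.pi * Complex.I * m * (M 1 0 : ℝ) * z₁ * z₂ /
        ((M 1 0 : ℝ) * τ + (M 1 1 : ℝ))) *
      φ (((M 0 0 : ℝ) * τ + (M 0 1 : ℝ)) / ((M 1 0 : ℝ) * τ + (M 1 1 : ℝ)))
        (z₁ / ((M 1 0 : ℝ) * τ + (M 1 1 : ℝ)))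
        (z₂ / ((M 1 0 : ℝ) * τ + (M 1 1 : ℝ)))

section Regularity

open Metric Function

variable {E : Type*} [NormedAddCommGroup E] [NormedSpace ℂ E] [CompleteSpace E]

theorem differentiable_intervalIntegral_of_continuous_uncurry {G : ℝ → ℂ → E}
    (hc : Continuous (uncurry G)) (hd : ∀ θ, Differentiable ℂ (G θ)) (a b : ℝ) :
    Differentiable ℂ (fun w => ∫ θ in a..b, G θ w) := by
  intro w₀
  obtain ⟨B, hB⟩ := (isCompact_uIcc.prod (isCompact_closedBall w₀ 2)).exists_bound_of_continuousOn
    hc.continuousOn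
  -- Cauchy estimates on circles of radius `1` give a bound on `ball w₀ 1` uniform in `θ`.
  have hderiv_le : ∀ θ ∈ Set.uIcc a b, ∀ w ∈ ball w₀ 1, ‖deriv (G θ) w‖ ≤ B := by
    intro θ hθ w hw
    simpa using norm_deriv_le_of_forall_mem_sphere_norm_le one_pos (hd θ).diffContOnCl
      fun v hv => hB (θ, v) ⟨hθ, mem_closedBall.mpr <| by
        linarith [dist_triangle v w w₀, mem_sphere.mp hv, mem_ball.mp hw]⟩
  have hcont : ∀ w, Continuous (G · w) := fun w => hc.comp (continuous_id.prodMk continuous_const)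
  exact (intervalIntegral.hasDerivAt_integral_of_dominated_loc_of_deriv_le (bound := fun _ => B)
    (ball_mem_nhds w₀ one_pos) (.of_forall fun w => (hcont w).aestronglyMeasurable)
    ((hcont w₀).intervalIntegrable a b)
    ((aestronglyMeasurable_deriv_with_param hc _).comp_measurable measurable_prodMk_right)
    (.of_forall fun θ hθ w hw => hderiv_le θ (Set.uIoc_subset_uIcc hθ) w hw)
    intervalIntegrable_const
    (.of_forall fun θ _ w _ => (hd θ w).hasDerivAt)).2.differentiableAt

theorem differentiable_deriv_fst {ψ : ℂ → ℂ → E} (hψ : Differentiable ℂ (uncurry ψ)) (a : ℂ) :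
    Differentiable ℂ (fun w => deriv (fun u => ψ u w) a) := by
  have hcauchy : (fun w => deriv (fun u => ψ u w) a) = fun w => cderiv 1 (fun u => ψ u w) a :=
    funext fun w => (cderiv_eq_deriv isOpen_univ
      (hψ.comp (differentiable_id.prodMk (differentiable_const w))).differentiableOn one_pos
      (Set.subset_univ _)).symm
  simp only [hcauchy, cderiv, circleIntegral, deriv_circleMap, circleMap_sub_center]
  refine (differentiable_intervalIntegral_of_continuous_uncurry ?_ (fun θ => ?_) _ _).const_smul _
  · have hne : ∀ θ, circleMap 0 1 θ ^ 2 ≠ 0 :=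
      fun θ => pow_ne_zero _ (circleMap_ne_center one_ne_zero)
    exact ((continuous_circleMap 0 1).fst'.mul continuous_const).smul
      ((((continuous_circleMap 0 1).pow 2).inv₀ hne).fst'.smul
        (hψ.continuous.comp ((continuous_circleMap a 1).fst'.prodMk continuous_snd)))
  · exact ((hψ.comp ((differentiable_const _).prodMk differentiable_id)).const_smul _).const_smul _

end Regularity

section ThreeVariables

variable {𝕜 : Type*} [NontriviallyNormedField 𝕜] {E : Type*} [NormedAddCommGroup E]
  [NormedSpace 𝕜 E] {φ : 𝕜 → 𝕜 → 𝕜 → E}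

theorem differentiable_slice₂ (hφ : Differentiable 𝕜 (fun p : 𝕜 × 𝕜 × 𝕜 => φ p.1 p.2.1 p.2.2))
    (a b : 𝕜) : Differentiable 𝕜 (fun v => φ a v b) :=
  hφ.comp ((differentiable_const a).prodMk (differentiable_id.prodMk (differentiable_const b)))

theorem differentiable_slice₃ (hφ : Differentiable 𝕜 (fun p : 𝕜 × 𝕜 × 𝕜 => φ p.1 p.2.1 p.2.2))
    (a b : 𝕜) : Differentiable 𝕜 (fun v => φ a b v) :=
  hφ.comp ((differentiable_const a).prodMk ((differentiable_const b).prodMk differentiable_id))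

theorem hasDerivAt_comp₃ {f g h : 𝕜 → 𝕜} {f' g' h' t : 𝕜}
    (hφ : DifferentiableAt 𝕜 (fun p : 𝕜 × 𝕜 × 𝕜 => φ p.1 p.2.1 p.2.2) (f t, g t, h t))
    (hf : HasDerivAt f f' t) (hg : HasDerivAt g g' t) (hh : HasDerivAt h h' t) :
    HasDerivAt (fun s => φ (f s) (g s) (h s))
      (f' • deriv (fun v => φ v (g t) (h t)) (f t) + g' • deriv (fun v => φ (f t) v (h t)) (g t)
        + h' • deriv (fun v => φ (f t) (g t) v) (h t)) t := by
  set Φ : 𝕜 × 𝕜 × 𝕜 → E := fun p => φ p.1 p.2.1 p.2.2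
  set L := fderiv 𝕜 Φ (f t, g t, h t)
  have hL : HasFDerivAt Φ L (f t, g t, h t) := hφ.hasFDerivAt
  have h₁ : HasDerivAt (fun v => φ v (g t) (h t)) (L (1, 0, 0)) (f t) :=
    HasFDerivAt.comp_hasDerivAt (l := Φ) (f t) hL ((hasDerivAt_id' (f t)).prodMk
      ((hasDerivAt_const (f t) (g t)).prodMk (hasDerivAt_const (f t) (h t))))
  have h₂ : HasDerivAt (fun v => φ (f t) v (h t)) (L (0, 1, 0)) (g t) :=
    HasFDerivAt.comp_hasDerivAt (l := Φ) (g t) hL ((hasDerivAt_const (g t) (f t)).prodMk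
      ((hasDerivAt_id' (g t)).prodMk (hasDerivAt_const (g t) (h t))))
  have h₃ : HasDerivAt (fun v => φ (f t) (g t) v) (L (0, 0, 1)) (h t) :=
    HasFDerivAt.comp_hasDerivAt (l := Φ) (h t) hL ((hasDerivAt_const (h t) (f t)).prodMk
      ((hasDerivAt_const (h t) (g t)).prodMk (hasDerivAt_id' (h t))))
  have hsplit : ((f', g', h') : 𝕜 × 𝕜 × 𝕜) = f' • (1, 0, 0) + g' • (0, 1, 0) + h' • (0, 0, 1) := by
    simp
  rw [h₁.deriv, h₂.deriv, h₃.deriv, ← map_smul, ← map_smul, ← map_smul, ← map_add, ← map_add,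
    ← hsplit]
  exact hL.comp_hasDerivAt t (hf.prodMk (hg.prodMk hh))

end ThreeVariables

theorem hasDerivAt_moebius {A B C D τ : ℂ} (hdet : A * D - B * C = 1) (hJ : C * τ + D ≠ 0) :
    HasDerivAt (fun t => (A * t + B) / (C * t + D)) (1 / (C * τ + D) ^ 2) τ := by
  have hnum := ((hasDerivAt_id' τ).const_mul A).add_const B
  have hden := ((hasDerivAt_id' τ).const_mul C).add_const D
  exact (hnum.div hden hJ).congr_deriv (by field_simp; linear_combination hdet)

-- `hermSlash k m M` is, definitionally, `hermSlashEntries k m a b c d` for the entries of `M`.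
noncomputable def hermSlashEntries (k m : ℤ) (A B C D : ℂ) (φ : ℂ → ℂ → ℂ → ℂ) :
    ℂ → ℂ → ℂ → ℂ :=
  fun τ z₁ z₂ =>
    (C * τ + D) ^ (-k) * exp (-2 * Real.pi * I * m * C * z₁ * z₂ / (C * τ + D)) *
      φ ((A * τ + B) / (C * τ + D)) (z₁ / (C * τ + D)) (z₂ / (C * τ + D))

section Slash

variable {k m : ℤ} {A B C D : ℂ} {φ : ℂ → ℂ → ℂ → ℂ} (τ : ℂ)

local notation "J" => C * τ + D
local notation "σ" => (A * τ + B) / (C * τ + D)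

theorem hasDerivAt_hermSlashEntries_fst
    (hφ : Differentiable ℂ (fun p : ℂ × ℂ × ℂ => φ p.1 p.2.1 p.2.2)) (z₁ w : ℂ) :
    HasDerivAt (fun u => hermSlashEntries k m A B C D φ τ u w)
      (J ^ (-k) * exp (-2 * Real.pi * I * m * C * z₁ * w / J) *
        (-2 * Real.pi * I * m * C * w / J * φ σ (z₁ / J) (w / J) +
          deriv (fun v => φ σ v (w / J)) (z₁ / J) / J)) z₁ := by
  have hexp :=
    ((((hasDerivAt_id' z₁).const_mul (-2 * Real.pi * I * m * C)).mul_const w).div_const J).cexp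
  have hφu := (differentiable_slice₂ hφ σ (w / J) _).hasDerivAt.comp z₁
    ((hasDerivAt_id' z₁).div_const J)
  exact ((hexp.const_mul (J ^ (-k))).mul hφu).congr_deriv (by simp only [Function.comp]; ring)

theorem hasDerivAt_hermSlashEntries_snd
    (hφ : Differentiable ℂ (fun p : ℂ × ℂ × ℂ => φ p.1 p.2.1 p.2.2)) (z₁ z₂ : ℂ) :
    HasDerivAt (fun w => hermSlashEntries k m A B C D φ τ z₁ w)
      (J ^ (-k) * exp (-2 * Real.pi * I * m * C * z₁ * z₂ / J) *
        (-2 * Real.pi * I * m * C * z₁ / J * φ σ (z₁ / J) (z₂ / J) +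
          deriv (fun v => φ σ (z₁ / J) v) (z₂ / J) / J)) z₂ := by
  have hexp := (((hasDerivAt_id' z₂).const_mul (-2 * Real.pi * I * m * C * z₁)).div_const J).cexp
  have hφw := (differentiable_slice₃ hφ σ (z₁ / J) _).hasDerivAt.comp z₂
    ((hasDerivAt_id' z₂).div_const J)
  exact ((hexp.const_mul (J ^ (-k))).mul hφw).congr_deriv (by simp only [Function.comp]; ring)

theorem deriv_deriv_hermSlashEntries
    (hφ : Differentiable ℂ (fun p : ℂ × ℂ × ℂ => φ p.1 p.2.1 p.2.2)) (z₁ z₂ : ℂ) :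
    deriv (fun w => deriv (fun u => hermSlashEntries k m A B C D φ τ u w) z₁) z₂ =
      J ^ (-k) * exp (-2 * Real.pi * I * m * C * z₁ * z₂ / J) *
        (-2 * Real.pi * I * m * C / J *
            ((-2 * Real.pi * I * m * C * z₁ * z₂ / J + 1) * φ σ (z₁ / J) (z₂ / J) +
              z₁ / J * deriv (fun v => φ σ v (z₂ / J)) (z₁ / J) +
              z₂ / J * deriv (fun v => φ σ (z₁ / J) v) (z₂ / J)) +
          deriv (fun x => deriv (fun v => φ σ v x) (z₁ / J)) (z₂ / J) / J ^ 2) := by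
  rw [funext fun w => (hasDerivAt_hermSlashEntries_fst τ hφ z₁ w).deriv]
  have hexp := (((hasDerivAt_id' z₂).const_mul (-2 * Real.pi * I * m * C * z₁)).div_const J).cexp
  have hlin := ((hasDerivAt_id' z₂).const_mul (-2 * Real.pi * I * m * C)).div_const J
  have hφw := (differentiable_slice₃ hφ σ (z₁ / J) _).hasDerivAt.comp z₂
    ((hasDerivAt_id' z₂).div_const J)
  have hφuw := (differentiable_deriv_fst (ψ := fun v x => φ σ v x)
    (hφ.comp ((differentiable_const σ).prodMk differentiable_id)) (z₁ / J) _).hasDerivAt.comp z₂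
    ((hasDerivAt_id' z₂).div_const J)
  refine (((hexp.const_mul (J ^ (-k))).mul ((hlin.mul hφw).add
    (hφuw.div_const J))).congr_deriv ?_).deriv
  simp only [Function.comp_apply, Pi.add_apply, Pi.mul_apply]
  generalize J = c
  ring

theorem hasDerivAt_hermSlashEntries_tau
    (hφ : Differentiable ℂ (fun p : ℂ × ℂ × ℂ => φ p.1 p.2.1 p.2.2)) (hdet : A * D - B * C = 1)
    (hJ : J ≠ 0) (z₁ z₂ : ℂ) :
    HasDerivAt (fun t => hermSlashEntries k m A B C D φ t z₁ z₂)
      (J ^ (-k) * exp (-2 * Real.pi * I * m * C * z₁ * z₂ / J) *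
        ((-k * C / J + 2 * Real.pi * I * m * C ^ 2 * z₁ * z₂ / J ^ 2) * φ σ (z₁ / J) (z₂ / J) +
          deriv (fun v => φ v (z₁ / J) (z₂ / J)) σ / J ^ 2 -
          C * z₁ / J ^ 2 * deriv (fun v => φ σ v (z₂ / J)) (z₁ / J) -
          C * z₂ / J ^ 2 * deriv (fun v => φ σ (z₁ / J) v) (z₂ / J))) τ := by
  have hden := ((hasDerivAt_id' τ).const_mul C).add_const D
  have hpow := (hasDerivAt_zpow (-k) J (Or.inl hJ)).comp τ hden
  have hexp := ((hasDerivAt_const τ (-2 * Real.pi * I * m * C * z₁ * z₂)).fun_div hden hJ).cexp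
  have hφt := hasDerivAt_comp₃ (hφ _) (hasDerivAt_moebius hdet hJ)
    ((hasDerivAt_const τ z₁).fun_div hden hJ) ((hasDerivAt_const τ z₂).fun_div hden hJ)
  refine ((hpow.fun_mul hexp).fun_mul hφt).congr_deriv ?_
  simp only [Function.comp_apply, smul_eq_mul, zpow_sub_one₀ hJ]
  push_cast
  field_simp
  ring

theorem heatOp_hermSlashEntries
    (hφ : Differentiable ℂ (fun p : ℂ × ℂ × ℂ => φ p.1 p.2.1 p.2.2)) (hdet : A * D - B * C = 1)
    {z₁ z₂ : ℂ} (hJ : J ≠ 0) (h₁ : z₁ ≠ 0) (h₂ : z₂ ≠ 0) :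
    heatOp k m (hermSlashEntries k m A B C D φ) τ z₁ z₂ =
      hermSlashEntries (k + 2) m A B C D (heatOp k m φ) τ z₁ z₂ := by
  simp only [heatOp]
  rw [(hasDerivAt_hermSlashEntries_tau τ hφ hdet hJ z₁ z₂).deriv,
    (hasDerivAt_hermSlashEntries_snd τ hφ z₁ z₂).deriv,
    (hasDerivAt_hermSlashEntries_fst τ hφ z₁ z₂).deriv, deriv_deriv_hermSlashEntries τ hφ z₁ z₂]
  simp only [hermSlashEntries, heatOp, neg_add, zpow_add₀ hJ, _root_.zpow_neg, zpow_ofNat]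
  field_simp
  ring

end Slash

theorem heatOp_slash_commute (k m : ℤ) (φ : ℂ → ℂ → ℂ → ℂ)
    (hφ : Differentiable ℂ (fun p : ℂ × ℂ × ℂ => φ p.1 p.2.1 p.2.2))
    (M : Matrix.SpecialLinearGroup (Fin 2) ℝ) :
    ∀ τ z₁ z₂ : ℂ, 0 < τ.im → z₁ ≠ 0 → z₂ ≠ 0 →
      heatOp k m (hermSlash k m M φ) τ z₁ z₂ =
        hermSlash (k + 2) m M (heatOp k m φ) τ z₁ z₂ := by
  intro τ z₁ z₂ hτ h₁ h₂
  have hdet : (M 0 0 : ℂ) * M 1 1 - M 0 1 * M 1 0 = 1 := by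
    have h := M.det_coe
    rw [Matrix.det_fin_two] at h
    exact_mod_cast h
  exact heatOp_hermSlashEntries τ hφ hdet
    (UpperHalfPlane.denom_ne_zero_of_im (M : GL (Fin 2) ℝ) hτ.ne') h₁ h₂
end

section
/- Let k ≥ 4 and ν ≥ 0 be integers and let ξ_μ (0 ≤ μ ≤ ν) and χ_{μ,μ} (0 ≤ μ ≤ ν) be smooth functions related by ξ_μ = μ! Σ_{j=0}^{μ} (−4)^{μ−j} (8πim)^j ((k+2μ−j−2)!/(j!(k+μ−2)!)) χ^{(j)}_{μ−j,μ−j} for every 0 ≤ μ ≤ ν (where f^{(j)} denotes the j-th derivative). Then χ_{ν,ν} = (1/(ν! 4^ν)) Σ_{μ=0}^{ν} (−1)^{ν−μ} (8πim)^μ binom(ν,μ) ((k+2ν−2μ−1)(k+ν−μ−2)!/((k+2ν−μ−1)!)) ξ^{(μ)}_{ν−μ}. -/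
/-
Substituting the relation for each `ξ_{ν-μ}` into the right-hand side and collecting terms by
`s = μ + j`, the coefficient of `(8πim)^s χ^{(s)}_{ν-s}` is `∑_{μ ≤ s} β_{ν,μ} α_{ν-μ,s-μ}`, where
`α` and `β` are the coefficients of the two formulas. After reflecting `μ ↦ s - μ` this is, up to a
nonzero factor, `∑_{i ≤ s} (-1)^i C(s,i) (b+1+2i) (b+i)! / (b+i+s+1)!` with `b = k + 2ν - 2s - 2`,
a telescoping sum that vanishes for `s ≥ 1`. So only `s = 0` survives, and it gives `χ_ν`.
-/

open Complex Finset

open scoped Nat ContDiff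

theorem iteratedDeriv_fun_sum_mul_iteratedDeriv {𝕜 ι : Type*} [NontriviallyNormedField 𝕜]
    (s : Finset ι) (c : ι → 𝕜) (d : ι → ℕ) {f : ι → 𝕜 → 𝕜} (hf : ∀ i ∈ s, ContDiff 𝕜 ∞ (f i))
    (n : ℕ) (x : 𝕜) :
    iteratedDeriv n (fun z => ∑ i ∈ s, c i * iteratedDeriv (d i) (f i) z) x =
      ∑ i ∈ s, c i * iteratedDeriv (n + d i) (f i) x := by
  have hsmooth : ∀ i ∈ s, ContDiff 𝕜 ∞ (iteratedDeriv (d i) (f i)) := fun i hi => by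
    rw [iteratedDeriv_eq_iterate]; exact (hf i hi).iterate_deriv _
  rw [iteratedDeriv_fun_sum fun i hi =>
    (contDiff_const.mul (hsmooth i hi)).contDiffAt.of_le (mod_cast le_top)]
  refine sum_congr rfl fun i _ => ?_
  rw [iteratedDeriv_const_mul_field]
  simp only [iteratedDeriv_eq_iterate, Function.iterate_add_apply]

theorem sum_triangular_inversion {R : Type*} [CommRing R] (a : ℕ → ℕ → R) (b : ℕ → R) (A : R)
    (u v : ℕ → ℕ → R) {ν : ℕ}
    (hu : ∀ μ ≤ ν, ∀ d, u μ d = ∑ j ∈ range (μ + 1), a μ j * A ^ j * v (μ - j) (d + j))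
    (horth : ∀ s ≤ ν, ∑ μ ∈ range (s + 1), b μ * a (ν - μ) (s - μ) = if s = 0 then 1 else 0) :
    ∑ μ ∈ range (ν + 1), b μ * A ^ μ * u (ν - μ) μ = v ν 0 := by
  calc ∑ μ ∈ range (ν + 1), b μ * A ^ μ * u (ν - μ) μ
      = ∑ μ ∈ range (ν + 1), ∑ j ∈ range (ν + 1 - μ),
          b μ * A ^ μ * (a (ν - μ) j * A ^ j * v (ν - μ - j) (μ + j)) := by
        refine sum_congr rfl fun μ hμ => ?_
        have hμ : μ ≤ ν := Nat.lt_succ_iff.mp (mem_range.mp hμ)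
        rw [hu _ (Nat.sub_le ν μ), mul_sum, Nat.sub_add_comm hμ]
    _ = ∑ s ∈ range (ν + 1), ∑ μ ∈ range (s + 1),
          b μ * A ^ μ * (a (ν - μ) (s - μ) * A ^ (s - μ) * v (ν - μ - (s - μ)) (μ + (s - μ))) :=
        (sum_range_diag_flip _ _).symm
    _ = ∑ s ∈ range (ν + 1),
          A ^ s * v (ν - s) s * ∑ μ ∈ range (s + 1), b μ * a (ν - μ) (s - μ) := by
        refine sum_congr rfl fun s _ => ?_
        rw [mul_sum]
        refine sum_congr rfl fun μ hμ => ?_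
        obtain ⟨r, rfl⟩ := Nat.exists_eq_add_of_le (Nat.lt_succ_iff.mp (mem_range.mp hμ))
        rw [Nat.add_sub_cancel_left, Nat.sub_sub, pow_add]
        ring
    _ = v ν 0 := by
        rw [sum_congr rfl fun s hs => by rw [horth s (Nat.lt_succ_iff.mp (mem_range.mp hs))]]
        simp

section Combinatorics

variable {K : Type*} [Field K] [CharZero K]

-- The summand is Gosper-summable; this closed form of its partial sums is the certificate.
theorem partial_sum_alternating_choose_mul_factorial_ratio (b S n : ℕ) :
    ∑ i ∈ range (n + 1), (-1 : K) ^ i * (S + 1).choose i * (b + 1 + 2 * i) *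
        ((b + i)! / (b + i + S + 2)! : K) =
      (-1) ^ n * S.choose n * ((b + n + 1)! / (b + n + S + 2)! : K) := by
  induction n with
  | zero => simp [Nat.factorial_succ]; ring
  | succ n ih =>
    rw [sum_range_succ, ih]
    have hchoose : ((S + 1).choose (n + 1) : K) * (n + 1) = (S + 1) * S.choose n := by
      exact_mod_cast (Nat.add_one_mul_choose_eq S n).symm
    have hpascal : ((S + 1).choose (n + 1) : K) = S.choose n + S.choose (n + 1) := by
      exact_mod_cast Nat.choose_succ_succ S n
    rw [show b + (n + 1) + 1 = b + n + 1 + 1 by ring,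
      show b + (n + 1) + S + 2 = b + n + S + 2 + 1 by ring, show b + (n + 1) = b + n + 1 by ring,
      Nat.factorial_succ (b + n + 1), Nat.factorial_succ (b + n + S + 2)]
    have h1 : ((b + n + S + 2)! : K) ≠ 0 := Nat.cast_ne_zero.mpr (Nat.factorial_ne_zero _)
    have h2 : ((b + n + S + 2 + 1 : ℕ) : K) ≠ 0 := Nat.cast_ne_zero.mpr (Nat.succ_ne_zero _)
    push_cast at hchoose h2 ⊢
    field_simp
    rw [pow_succ]
    linear_combination (-1 : K) ^ n * ((b + n + 1)! : K) * (-hchoose - (n + b + 2) * hpascal)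

theorem sum_alternating_choose_mul_factorial_ratio (b s : ℕ) :
    ∑ i ∈ range (s + 1), (-1 : K) ^ i * s.choose i * (b + 1 + 2 * i) *
        ((b + i)! / (b + i + s + 1)! : K) = if s = 0 then 1 else 0 := by
  rcases s with _ | S
  · have hb : (b ! : K) ≠ 0 := Nat.cast_ne_zero.mpr b.factorial_ne_zero
    simp [Nat.factorial_succ, field]
  · have h := partial_sum_alternating_choose_mul_factorial_ratio (K := K) b S (S + 1)
    rw [Nat.choose_succ_self, Nat.cast_zero, mul_zero, zero_mul] at h
    simp only [if_neg S.succ_ne_zero]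
    exact h

end Combinatorics

section Coefficients

variable (K : Type*) [Field K]

-- `ξ_μ = ∑_j dnuCoeff k μ j (8πim)^j χ_{μ-j}^{(j)}`, the factor `(8πim)^j` being kept apart.
def dnuCoeff (k μ j : ℕ) : K :=
  μ ! * (-4) ^ (μ - j) * ((k + 2 * μ - j - 2)! / (j ! * (k + μ - 2)!))

def dnuInvCoeff (k ν μ : ℕ) : K :=
  1 / (ν ! * 4 ^ ν) * ((-1) ^ (ν - μ) * ν.choose μ *
    ((k + 2 * ν - 2 * μ - 1 : ℕ) * (k + ν - μ - 2)! / (k + 2 * ν - μ - 1)!))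

variable {K} [CharZero K]

-- With `k = c + 2`, `ν = s + t` and `μ = s - i` every truncated subtraction in the coefficients
-- is exact.
theorem dnuInvCoeff_mul_dnuCoeff (c s t i : ℕ) (hi : i ≤ s) :
    dnuInvCoeff K (c + 2) (s + t) (s - i) * dnuCoeff K (c + 2) (s + t - (s - i)) (s - (s - i)) =
      4 ^ t / (4 ^ (s + t) * s !) * ((-1) ^ i * s.choose i * ((c + 2 * t : ℕ) + 1 + 2 * i) *
        ((c + 2 * t + i)! / (c + 2 * t + i + s + 1)!)) := by
  have e1 : s + t - (s - i) = t + i := by omega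
  have e2 : s - (s - i) = i := by omega
  have e3 : c + 2 + 2 * (s + t) - 2 * (s - i) - 1 = c + 2 * t + 2 * i + 1 := by omega
  have e4 : c + 2 + (s + t) - (s - i) - 2 = c + t + i := by omega
  have e5 : c + 2 + 2 * (s + t) - (s - i) - 1 = c + 2 * t + i + s + 1 := by omega
  have e6 : c + 2 + 2 * (t + i) - i - 2 = c + 2 * t + i := by omega
  have e7 : c + 2 + (t + i) - 2 = c + t + i := by omega
  have e8 : t + i - i = t := by omega
  unfold dnuInvCoeff dnuCoeff
  rw [Nat.cast_choose K (show s - i ≤ s + t by omega), Nat.cast_choose K hi]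
  simp only [e1, e2, e3, e4, e5, e6, e7, e8]
  have hsign : (-1 : K) ^ (t + i) * (-4) ^ t = (-1) ^ i * 4 ^ t := by
    rw [show (-4 : K) = -1 * 4 by norm_num, mul_pow, pow_add, mul_mul_mul_comm, ← pow_add,
      Even.neg_one_pow ⟨t, rfl⟩, one_mul, mul_comm]
  have hfac (n : ℕ) : (n ! : K) ≠ 0 := Nat.cast_ne_zero.mpr n.factorial_ne_zero
  field_simp [hfac]
  push_cast
  linear_combination (c + 2 * t + 2 * i + 1 : K) * hsign

theorem sum_dnuInvCoeff_mul_dnuCoeff {k ν s : ℕ} (hk : 2 ≤ k) (hs : s ≤ ν) :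
    ∑ μ ∈ range (s + 1), dnuInvCoeff K k ν μ * dnuCoeff K k (ν - μ) (s - μ) =
      if s = 0 then 1 else 0 := by
  obtain ⟨c, rfl⟩ := Nat.exists_eq_add_of_le' hk
  obtain ⟨t, rfl⟩ := Nat.exists_eq_add_of_le hs
  rw [← sum_range_reflect]
  simp only [add_tsub_cancel_right]
  rw [sum_congr rfl fun i hi =>
      dnuInvCoeff_mul_dnuCoeff c s t i (Nat.lt_succ_iff.mp (mem_range.mp hi)), ← mul_sum,
    sum_alternating_choose_mul_factorial_ratio]
  split_ifs with hs0
  · subst hs0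
    simp
  · rw [mul_zero]

end Coefficients

theorem inversion_of_Dnu_formula_general (k : ℕ) (hk : 4 ≤ k) (m : ℕ)
    (ν : ℕ) (ξ χ : ℕ → ℂ → ℂ)
    (hχ : ∀ μ, ContDiff ℂ ⊤ (χ μ))
    (hrel : ∀ μ ≤ ν, ∀ τ : ℂ,
      ξ μ τ = (μ.factorial : ℂ) *
        ∑ j ∈ range (μ + 1),
          (-4 : ℂ) ^ (μ - j) * (8 * Real.pi * Complex.I * m) ^ j *
            (((k + 2 * μ - j - 2).factorial : ℂ) /
              ((j.factorial : ℂ) * ((k + μ - 2).factorial : ℂ))) *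
            iteratedDeriv j (χ (μ - j)) τ) :
    ∀ τ : ℂ,
      χ ν τ = (1 / ((ν.factorial : ℂ) * 4 ^ ν)) *
        ∑ μ ∈ range (ν + 1),
          (-1 : ℂ) ^ (ν - μ) * (8 * Real.pi * Complex.I * m) ^ μ *
            (ν.choose μ : ℂ) *
            (((k + 2 * ν - 2 * μ - 1 : ℕ) : ℂ) * ((k + ν - μ - 2).factorial : ℂ) /
              ((k + 2 * ν - μ - 1).factorial : ℂ)) *
            iteratedDeriv μ (ξ (ν - μ)) τ := by
  intro τ
  set A : ℂ := 8 * Real.pi * Complex.I * m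
  have hξ (μ : ℕ) (hμ : μ ≤ ν) : ξ μ = fun z =>
      ∑ j ∈ range (μ + 1), dnuCoeff ℂ k μ j * A ^ j * iteratedDeriv j (χ (μ - j)) z := by
    ext z
    rw [hrel μ hμ z, mul_sum]
    exact sum_congr rfl fun j _ => by rw [dnuCoeff]; ring
  have hderiv (μ : ℕ) (hμ : μ ≤ ν) (d : ℕ) : iteratedDeriv d (ξ μ) τ =
      ∑ j ∈ range (μ + 1), dnuCoeff ℂ k μ j * A ^ j * iteratedDeriv (d + j) (χ (μ - j)) τ := by
    rw [hξ μ hμ, iteratedDeriv_fun_sum_mul_iteratedDeriv _ _ _ fun j _ => (hχ _).of_le le_top]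
  have hinv := sum_triangular_inversion (dnuCoeff ℂ k) (dnuInvCoeff ℂ k ν) A
    (fun μ d => iteratedDeriv d (ξ μ) τ) (fun n d => iteratedDeriv d (χ n) τ) hderiv
    fun s hs => sum_dnuInvCoeff_mul_dnuCoeff (by omega) hs
  rw [iteratedDeriv_zero] at hinv
  rw [← hinv, mul_sum]
  exact sum_congr rfl fun μ _ => by rw [dnuInvCoeff]; ring

theorem inversion_of_Dnu_formula (k : ℕ) (hk : 4 ≤ k) (m : ℕ) (hm : 0 < m)
    (ν : ℕ) (ξ χ : ℕ → ℂ → ℂ)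
    (hχ : ∀ μ, ContDiff ℂ ⊤ (χ μ))
    (hrel : ∀ μ ≤ ν, ∀ τ : ℂ,
      ξ μ τ = (μ.factorial : ℂ) *
        ∑ j ∈ range (μ + 1),
          (-4 : ℂ) ^ (μ - j) * (8 * Real.pi * Complex.I * m) ^ j *
            (((k + 2 * μ - j - 2).factorial : ℂ) /
              ((j.factorial : ℂ) * ((k + μ - 2).factorial : ℂ))) *
            iteratedDeriv j (χ (μ - j)) τ) :
    ∀ τ : ℂ,
      χ ν τ = (1 / ((ν.factorial : ℂ) * 4 ^ ν)) *
        ∑ μ ∈ range (ν + 1),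
          (-1 : ℂ) ^ (ν - μ) * (8 * Real.pi * Complex.I * m) ^ μ *
            (ν.choose μ : ℂ) *
            (((k + 2 * ν - 2 * μ - 1 : ℕ) : ℂ) * ((k + ν - μ - 2).factorial : ℂ) /
              ((k + 2 * ν - μ - 1).factorial : ℂ)) *
            iteratedDeriv μ (ξ (ν - μ)) τ :=
  inversion_of_Dnu_formula_general k hk m ν ξ χ hχ hrel
end

section
/- Let m₁, m₂ be positive integers and φ, ψ : ℍ × ℂ² → ℂ holomorphic functions satisfying for all λ, μ ∈ ℤ[i]: φ(τ, z₁ + λτ + μ, z₂ + conj(λ)τ + conj(μ)) = exp(−2πi m₁(N(λ)τ + conj(λ)z₁ + λz₂)) φ(τ,z₁,z₂), and the analogous equation for ψ with index m₂. Then the function F = m₁ φ ∂ψ/∂z₂ − m₂ ψ ∂φ/∂z₂ satisfies the analogous translation equation with index m₁ + m₂, i.e., F(τ, z₁ + λτ + μ, z₂ + conj(λ)τ + conj(μ)) = exp(−2πi(m₁+m₂)(N(λ)τ + conj(λ)z₁ + λz₂)) F(τ,z₁,z₂) for all λ, μ ∈ ℤ[i]. -/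
/-! Along the lattice the `z₂`-translation multiplies `φ` and `ψ` by `exp (m₁ L)` and `exp (m₂ L)`
for one affine function `L` of `z₂` with slope `K`. Differentiating, `∂φ/∂z₂` picks up the extra
term `m₁ K φ` and `∂ψ/∂z₂` the term `m₂ K ψ`; in `m₁ φ ∂ψ/∂z₂ - m₂ ψ ∂φ/∂z₂` these contribute
`m₁ m₂ K φ ψ` with both signs and cancel, leaving the factor `exp ((m₁ + m₂) L)`. -/

open Complex

theorem deriv_add_const_of_eq_exp_affine_mul {f g : ℂ → ℂ} {m B K s : ℂ}
    (hg : Differentiable ℂ g) (hf : ∀ w, f (w + s) = exp (m * (B + K * w)) * g w) (z : ℂ) :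
    deriv f (z + s) = exp (m * (B + K * z)) * (m * K * g z + deriv g z) := by
  have hexp : HasDerivAt (fun w => exp (m * (B + K * w))) (exp (m * (B + K * z)) * (m * K)) z := by
    have hlin : HasDerivAt (fun w : ℂ => m * (B + K * w)) (m * K) z := by
      simpa using (((hasDerivAt_id z).const_mul K).const_add B).const_mul m
    exact hlin.cexp
  rw [← deriv_comp_add_const, funext hf, (hexp.fun_mul (hg z).hasDerivAt).deriv]
  ring

theorem wronskian_add_const_of_eq_exp_affine_mul {f₁ f₂ g₁ g₂ : ℂ → ℂ} {m₁ m₂ B K s : ℂ}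
    (hg₁ : Differentiable ℂ g₁) (hg₂ : Differentiable ℂ g₂)
    (hf₁ : ∀ w, f₁ (w + s) = exp (m₁ * (B + K * w)) * g₁ w)
    (hf₂ : ∀ w, f₂ (w + s) = exp (m₂ * (B + K * w)) * g₂ w) (z : ℂ) :
    m₁ * f₁ (z + s) * deriv f₂ (z + s) - m₂ * f₂ (z + s) * deriv f₁ (z + s) =
      exp ((m₁ + m₂) * (B + K * z)) * (m₁ * g₁ z * deriv g₂ z - m₂ * g₂ z * deriv g₁ z) := by
  rw [hf₁, hf₂, deriv_add_const_of_eq_exp_affine_mul hg₁ hf₁,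
    deriv_add_const_of_eq_exp_affine_mul hg₂ hf₂, add_mul, exp_add]
  ring

theorem derivative_construction_translation_general (m₁ m₂ : ℕ)
    (φ ψ : ℂ → ℂ → ℂ → ℂ)
    (hφd : ∀ τ z₁ : ℂ, Differentiable ℂ (φ τ z₁))
    (hψd : ∀ τ z₁ : ℂ, Differentiable ℂ (ψ τ z₁))
    (hφ : ∀ a b c d : ℤ, ∀ τ z₁ z₂ : ℂ,
      φ τ (z₁ + ((a : ℂ) + (b : ℂ) * Complex.I) * τ + ((c : ℂ) + (d : ℂ) * Complex.I))
        (z₂ + (starRingEnd ℂ) ((a : ℂ) + (b : ℂ) * Complex.I) * τ +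
          (starRingEnd ℂ) ((c : ℂ) + (d : ℂ) * Complex.I)) =
      Complex.exp (-2 * Real.pi * Complex.I * m₁ *
        ((Complex.normSq ((a : ℂ) + (b : ℂ) * Complex.I) : ℂ) * τ +
          (starRingEnd ℂ) ((a : ℂ) + (b : ℂ) * Complex.I) * z₁ +
          ((a : ℂ) + (b : ℂ) * Complex.I) * z₂)) * φ τ z₁ z₂)
    (hψ : ∀ a b c d : ℤ, ∀ τ z₁ z₂ : ℂ,
      ψ τ (z₁ + ((a : ℂ) + (b : ℂ) * Complex.I) * τ + ((c : ℂ) + (d : ℂ) * Complex.I))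
        (z₂ + (starRingEnd ℂ) ((a : ℂ) + (b : ℂ) * Complex.I) * τ +
          (starRingEnd ℂ) ((c : ℂ) + (d : ℂ) * Complex.I)) =
      Complex.exp (-2 * Real.pi * Complex.I * m₂ *
        ((Complex.normSq ((a : ℂ) + (b : ℂ) * Complex.I) : ℂ) * τ +
          (starRingEnd ℂ) ((a : ℂ) + (b : ℂ) * Complex.I) * z₁ +
          ((a : ℂ) + (b : ℂ) * Complex.I) * z₂)) * ψ τ z₁ z₂) :
    ∀ a b c d : ℤ, ∀ τ z₁ z₂ : ℂ,
      (fun τ' z₁' z₂' => (m₁ : ℂ) * φ τ' z₁' z₂' * deriv (ψ τ' z₁') z₂'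
          - (m₂ : ℂ) * ψ τ' z₁' z₂' * deriv (φ τ' z₁') z₂')
        τ (z₁ + ((a : ℂ) + (b : ℂ) * Complex.I) * τ + ((c : ℂ) + (d : ℂ) * Complex.I))
          (z₂ + (starRingEnd ℂ) ((a : ℂ) + (b : ℂ) * Complex.I) * τ +
            (starRingEnd ℂ) ((c : ℂ) + (d : ℂ) * Complex.I)) =
      Complex.exp (-2 * Real.pi * Complex.I * ((m₁ : ℂ) + m₂) *
        ((Complex.normSq ((a : ℂ) + (b : ℂ) * Complex.I) : ℂ) * τ +
          (starRingEnd ℂ) ((a : ℂ) + (b : ℂ) * Complex.I) * z₁ +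
          ((a : ℂ) + (b : ℂ) * Complex.I) * z₂)) *
        ((m₁ : ℂ) * φ τ z₁ z₂ * deriv (ψ τ z₁) z₂
          - (m₂ : ℂ) * ψ τ z₁ z₂ * deriv (φ τ z₁) z₂) := by
  intro a b c d τ z₁ z₂
  set l : ℂ := a + b * I
  set t : ℂ := z₁ + l * τ + (c + d * I)
  set s : ℂ := starRingEnd ℂ l * τ + starRingEnd ℂ (c + d * I)
  set B : ℂ := -2 * Real.pi * I * (normSq l * τ + starRingEnd ℂ l * z₁)
  set K : ℂ := -2 * Real.pi * I * l
  have factor (m w : ℂ) : -2 * Real.pi * I * m * (normSq l * τ + starRingEnd ℂ l * z₁ + l * w) =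
      m * (B + K * w) := by ring
  have hφ' (w : ℂ) : φ τ t (w + s) = exp (m₁ * (B + K * w)) * φ τ z₁ w := by
    rw [← factor, ← hφ a b c d τ z₁ w, add_assoc w]
  have hψ' (w : ℂ) : ψ τ t (w + s) = exp (m₂ * (B + K * w)) * ψ τ z₁ w := by
    rw [← factor, ← hψ a b c d τ z₁ w, add_assoc w]
  beta_reduce
  rw [add_assoc z₂, factor]
  exact wronskian_add_const_of_eq_exp_affine_mul (hφd τ z₁) (hψd τ z₁) hφ' hψ' z₂

theorem derivative_construction_translation (m₁ m₂ : ℕ) (hm₁ : 0 < m₁) (hm₂ : 0 < m₂)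
    (φ ψ : ℂ → ℂ → ℂ → ℂ)
    (hφd : ∀ τ z₁ : ℂ, Differentiable ℂ (φ τ z₁))
    (hψd : ∀ τ z₁ : ℂ, Differentiable ℂ (ψ τ z₁))
    (hφ : ∀ a b c d : ℤ, ∀ τ z₁ z₂ : ℂ,
      φ τ (z₁ + ((a : ℂ) + (b : ℂ) * Complex.I) * τ + ((c : ℂ) + (d : ℂ) * Complex.I))
        (z₂ + (starRingEnd ℂ) ((a : ℂ) + (b : ℂ) * Complex.I) * τ +
          (starRingEnd ℂ) ((c : ℂ) + (d : ℂ) * Complex.I)) =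
      Complex.exp (-2 * Real.pi * Complex.I * m₁ *
        ((Complex.normSq ((a : ℂ) + (b : ℂ) * Complex.I) : ℂ) * τ +
          (starRingEnd ℂ) ((a : ℂ) + (b : ℂ) * Complex.I) * z₁ +
          ((a : ℂ) + (b : ℂ) * Complex.I) * z₂)) * φ τ z₁ z₂)
    (hψ : ∀ a b c d : ℤ, ∀ τ z₁ z₂ : ℂ,
      ψ τ (z₁ + ((a : ℂ) + (b : ℂ) * Complex.I) * τ + ((c : ℂ) + (d : ℂ) * Complex.I))
        (z₂ + (starRingEnd ℂ) ((a : ℂ) + (b : ℂ) * Complex.I) * τ +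
          (starRingEnd ℂ) ((c : ℂ) + (d : ℂ) * Complex.I)) =
      Complex.exp (-2 * Real.pi * Complex.I * m₂ *
        ((Complex.normSq ((a : ℂ) + (b : ℂ) * Complex.I) : ℂ) * τ +
          (starRingEnd ℂ) ((a : ℂ) + (b : ℂ) * Complex.I) * z₁ +
          ((a : ℂ) + (b : ℂ) * Complex.I) * z₂)) * ψ τ z₁ z₂) :
    ∀ a b c d : ℤ, ∀ τ z₁ z₂ : ℂ,
      (fun τ' z₁' z₂' => (m₁ : ℂ) * φ τ' z₁' z₂' * deriv (ψ τ' z₁') z₂'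
          - (m₂ : ℂ) * ψ τ' z₁' z₂' * deriv (φ τ' z₁') z₂')
        τ (z₁ + ((a : ℂ) + (b : ℂ) * Complex.I) * τ + ((c : ℂ) + (d : ℂ) * Complex.I))
          (z₂ + (starRingEnd ℂ) ((a : ℂ) + (b : ℂ) * Complex.I) * τ +
            (starRingEnd ℂ) ((c : ℂ) + (d : ℂ) * Complex.I)) =
      Complex.exp (-2 * Real.pi * Complex.I * ((m₁ : ℂ) + m₂) *
        ((Complex.normSq ((a : ℂ) + (b : ℂ) * Complex.I) : ℂ) * τ +
          (starRingEnd ℂ) ((a : ℂ) + (b : ℂ) * Complex.I) * z₁ +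
          ((a : ℂ) + (b : ℂ) * Complex.I) * z₂)) *
        ((m₁ : ℂ) * φ τ z₁ z₂ * deriv (ψ τ z₁) z₂
          - (m₂ : ℂ) * ψ τ z₁ z₂ * deriv (φ τ z₁) z₂) :=
  derivative_construction_translation_general m₁ m₂ φ ψ hφd hψd hφ hψ
end

section
/- Let k₁, k₂, m₁, m₂ be positive integers and φ, ψ : ℍ × ℂ² → ℂ holomorphic functions satisfying the modular transformation φ(Mτ, z₁/(cτ+d), z₂/(cτ+d)) = (cτ+d)^{k₁} exp(2πi m₁ c z₁z₂/(cτ+d)) φ(τ,z₁,z₂) for all M = [[a,b],[c,d]] ∈ SL(2,ℤ), and similarly for ψ with (k₂, m₂). Then F = m₁ φ ∂ψ/∂z₂ − m₂ ψ ∂φ/∂z₂ satisfies the same modular transformation with weight k₁ + k₂ + 1 and index m₁ + m₂. -/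
/-!
Fix `M`, `τ`, `z₁`; with `(c, d)` the bottom row of `M` put `j = cτ + d` and `B = 2πi c z₁ / j`.
Then `w ↦ φ(Mτ, z₁/j, w/j)` equals `j^{k₁} exp(m₁ B w) φ(τ, z₁, w)`, so differentiating in `w`
produces, besides the expected factor `j`, an extra term `m₁ B φ`; likewise `m₂ B ψ` for `ψ`.
In `m₁ φ ∂ψ − m₂ ψ ∂φ` these extra terms contribute `m₁ m₂ B φ ψ − m₂ m₁ B ψ φ = 0`, and what
remains is the original combination multiplied by `j^{k₁+k₂+1} exp((m₁+m₂) B z₂)`.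
-/

open Complex

lemma Matrix.SpecialLinearGroup.denom_ne_zero_of_im_pos (M : Matrix.SpecialLinearGroup (Fin 2) ℤ)
    {τ : ℂ} (hτ : 0 < τ.im) : ((M 1 0 : ℤ) : ℂ) * τ + ((M 1 1 : ℤ) : ℂ) ≠ 0 := by
  simpa [UpperHalfPlane.denom] using
    UpperHalfPlane.denom_ne_zero_of_im (M : GL (Fin 2) ℝ) hτ.ne'

lemma deriv_comp_div_of_eq_mul_exp {j A C z : ℂ} {f g : ℂ → ℂ} (hj : j ≠ 0)
    (hf : DifferentiableAt ℂ f z) (hg : ∀ w, g (w / j) = A * exp (C * w) * f w) :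
    deriv g (z / j) = A * exp (C * z) * (C * f z + deriv f z) * j := by
  have hg_eq : g = fun u => A * exp (C * (j * u)) * f (j * u) := by
    funext u
    simpa only [mul_div_cancel_left₀ u hj] using hg (j * u)
  have hderiv : HasDerivAt (fun w => A * exp (C * w) * f w)
      (A * (exp (C * z) * (C * 1)) * f z + A * exp (C * z) * deriv f z) z :=
    ((((hasDerivAt_id z).const_mul C).cexp).const_mul A).mul hf.hasDerivAt
  rw [hg_eq, deriv_comp_mul_left j (fun w => A * exp (C * w) * f w), mul_div_cancel₀ z hj,
    hderiv.deriv, smul_eq_mul]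
  ring

lemma bracket_comp_div_of_eq_mul_exp {j B A₁ A₂ m₁ m₂ z : ℂ} {f₁ f₂ g₁ g₂ : ℂ → ℂ} (hj : j ≠ 0)
    (hf₁ : DifferentiableAt ℂ f₁ z) (hf₂ : DifferentiableAt ℂ f₂ z)
    (hg₁ : ∀ w, g₁ (w / j) = A₁ * exp (m₁ * B * w) * f₁ w)
    (hg₂ : ∀ w, g₂ (w / j) = A₂ * exp (m₂ * B * w) * f₂ w) :
    m₁ * g₁ (z / j) * deriv g₂ (z / j) - m₂ * g₂ (z / j) * deriv g₁ (z / j) =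
      A₁ * A₂ * j * exp ((m₁ + m₂) * B * z) *
        (m₁ * f₁ z * deriv f₂ z - m₂ * f₂ z * deriv f₁ z) := by
  rw [hg₁, hg₂, deriv_comp_div_of_eq_mul_exp hj hf₁ hg₁, deriv_comp_div_of_eq_mul_exp hj hf₂ hg₂,
    add_mul, add_mul, exp_add]
  ring

theorem derivative_construction_modular_general (k₁ k₂ m₁ m₂ : ℕ)
    (φ ψ : ℂ → ℂ → ℂ → ℂ)
    (hφd : ∀ τ z₁ : ℂ, Differentiable ℂ (φ τ z₁))
    (hψd : ∀ τ z₁ : ℂ, Differentiable ℂ (ψ τ z₁))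
    (hφ : ∀ M : Matrix.SpecialLinearGroup (Fin 2) ℤ, ∀ τ z₁ z₂ : ℂ, 0 < τ.im →
      φ (((M 0 0 : ℤ) * τ + (M 0 1 : ℤ)) / ((M 1 0 : ℤ) * τ + (M 1 1 : ℤ)))
        (z₁ / ((M 1 0 : ℤ) * τ + (M 1 1 : ℤ)))
        (z₂ / ((M 1 0 : ℤ) * τ + (M 1 1 : ℤ))) =
      ((M 1 0 : ℤ) * τ + (M 1 1 : ℤ)) ^ k₁ *
        Complex.exp (2 * Real.pi * Complex.I * m₁ * (M 1 0 : ℤ) * z₁ * z₂ /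
          ((M 1 0 : ℤ) * τ + (M 1 1 : ℤ))) * φ τ z₁ z₂)
    (hψ : ∀ M : Matrix.SpecialLinearGroup (Fin 2) ℤ, ∀ τ z₁ z₂ : ℂ, 0 < τ.im →
      ψ (((M 0 0 : ℤ) * τ + (M 0 1 : ℤ)) / ((M 1 0 : ℤ) * τ + (M 1 1 : ℤ)))
        (z₁ / ((M 1 0 : ℤ) * τ + (M 1 1 : ℤ)))
        (z₂ / ((M 1 0 : ℤ) * τ + (M 1 1 : ℤ))) =
      ((M 1 0 : ℤ) * τ + (M 1 1 : ℤ)) ^ k₂ *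
        Complex.exp (2 * Real.pi * Complex.I * m₂ * (M 1 0 : ℤ) * z₁ * z₂ /
          ((M 1 0 : ℤ) * τ + (M 1 1 : ℤ))) * ψ τ z₁ z₂) :
    ∀ M : Matrix.SpecialLinearGroup (Fin 2) ℤ, ∀ τ z₁ z₂ : ℂ, 0 < τ.im →
      (fun τ' z₁' z₂' => (m₁ : ℂ) * φ τ' z₁' z₂' * deriv (ψ τ' z₁') z₂'
          - (m₂ : ℂ) * ψ τ' z₁' z₂' * deriv (φ τ' z₁') z₂')
        (((M 0 0 : ℤ) * τ + (M 0 1 : ℤ)) / ((M 1 0 : ℤ) * τ + (M 1 1 : ℤ)))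
        (z₁ / ((M 1 0 : ℤ) * τ + (M 1 1 : ℤ)))
        (z₂ / ((M 1 0 : ℤ) * τ + (M 1 1 : ℤ))) =
      ((M 1 0 : ℤ) * τ + (M 1 1 : ℤ)) ^ (k₁ + k₂ + 1) *
        Complex.exp (2 * Real.pi * Complex.I * ((m₁ : ℂ) + m₂) * (M 1 0 : ℤ) * z₁ * z₂ /
          ((M 1 0 : ℤ) * τ + (M 1 1 : ℤ))) *
        ((m₁ : ℂ) * φ τ z₁ z₂ * deriv (ψ τ z₁) z₂
          - (m₂ : ℂ) * ψ τ z₁ z₂ * deriv (φ τ z₁) z₂) := by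
  intro M τ z₁ z₂ hτ
  set j : ℂ := ((M 1 0 : ℤ) : ℂ) * τ + ((M 1 1 : ℤ) : ℂ)
  set B : ℂ := 2 * Real.pi * I * ((M 1 0 : ℤ) : ℂ) * z₁ / j
  have hφw (w : ℂ) : φ ((((M 0 0 : ℤ) : ℂ) * τ + ((M 0 1 : ℤ) : ℂ)) / j) (z₁ / j) (w / j) =
      j ^ k₁ * exp (m₁ * B * w) * φ τ z₁ w := by
    rw [hφ M τ z₁ w hτ]
    congr 3
    simp only [B, j]
    ring
  have hψw (w : ℂ) : ψ ((((M 0 0 : ℤ) : ℂ) * τ + ((M 0 1 : ℤ) : ℂ)) / j) (z₁ / j) (w / j) =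
      j ^ k₂ * exp (m₂ * B * w) * ψ τ z₁ w := by
    rw [hψ M τ z₁ w hτ]
    congr 3
    simp only [B, j]
    ring
  beta_reduce
  rw [bracket_comp_div_of_eq_mul_exp (M.denom_ne_zero_of_im_pos hτ) (hφd τ z₁ z₂) (hψd τ z₁ z₂)
    hφw hψw]
  simp only [B, j]
  ring_nf

theorem derivative_construction_modular (k₁ k₂ m₁ m₂ : ℕ)
    (hk₁ : 0 < k₁) (hk₂ : 0 < k₂) (hm₁ : 0 < m₁) (hm₂ : 0 < m₂)
    (φ ψ : ℂ → ℂ → ℂ → ℂ)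
    (hφd : ∀ τ z₁ : ℂ, Differentiable ℂ (φ τ z₁))
    (hψd : ∀ τ z₁ : ℂ, Differentiable ℂ (ψ τ z₁))
    (hφ : ∀ M : Matrix.SpecialLinearGroup (Fin 2) ℤ, ∀ τ z₁ z₂ : ℂ, 0 < τ.im →
      φ (((M 0 0 : ℤ) * τ + (M 0 1 : ℤ)) / ((M 1 0 : ℤ) * τ + (M 1 1 : ℤ)))
        (z₁ / ((M 1 0 : ℤ) * τ + (M 1 1 : ℤ)))
        (z₂ / ((M 1 0 : ℤ) * τ + (M 1 1 : ℤ))) =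
      ((M 1 0 : ℤ) * τ + (M 1 1 : ℤ)) ^ k₁ *
        Complex.exp (2 * Real.pi * Complex.I * m₁ * (M 1 0 : ℤ) * z₁ * z₂ /
          ((M 1 0 : ℤ) * τ + (M 1 1 : ℤ))) * φ τ z₁ z₂)
    (hψ : ∀ M : Matrix.SpecialLinearGroup (Fin 2) ℤ, ∀ τ z₁ z₂ : ℂ, 0 < τ.im →
      ψ (((M 0 0 : ℤ) * τ + (M 0 1 : ℤ)) / ((M 1 0 : ℤ) * τ + (M 1 1 : ℤ)))
        (z₁ / ((M 1 0 : ℤ) * τ + (M 1 1 : ℤ)))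
        (z₂ / ((M 1 0 : ℤ) * τ + (M 1 1 : ℤ))) =
      ((M 1 0 : ℤ) * τ + (M 1 1 : ℤ)) ^ k₂ *
        Complex.exp (2 * Real.pi * Complex.I * m₂ * (M 1 0 : ℤ) * z₁ * z₂ /
          ((M 1 0 : ℤ) * τ + (M 1 1 : ℤ))) * ψ τ z₁ z₂) :
    ∀ M : Matrix.SpecialLinearGroup (Fin 2) ℤ, ∀ τ z₁ z₂ : ℂ, 0 < τ.im →
      (fun τ' z₁' z₂' => (m₁ : ℂ) * φ τ' z₁' z₂' * deriv (ψ τ' z₁') z₂'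
          - (m₂ : ℂ) * ψ τ' z₁' z₂' * deriv (φ τ' z₁') z₂')
        (((M 0 0 : ℤ) * τ + (M 0 1 : ℤ)) / ((M 1 0 : ℤ) * τ + (M 1 1 : ℤ)))
        (z₁ / ((M 1 0 : ℤ) * τ + (M 1 1 : ℤ)))
        (z₂ / ((M 1 0 : ℤ) * τ + (M 1 1 : ℤ))) =
      ((M 1 0 : ℤ) * τ + (M 1 1 : ℤ)) ^ (k₁ + k₂ + 1) *
        Complex.exp (2 * Real.pi * Complex.I * ((m₁ : ℂ) + m₂) * (M 1 0 : ℤ) * z₁ * z₂ /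
          ((M 1 0 : ℤ) * τ + (M 1 1 : ℤ))) *
        ((m₁ : ℂ) * φ τ z₁ z₂ * deriv (ψ τ z₁) z₂
          - (m₂ : ℂ) * ψ τ z₁ z₂ * deriv (φ τ z₁) z₂) :=
  derivative_construction_modular_general k₁ k₂ m₁ m₂ φ ψ hφd hψd hφ hψ
end
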